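/- arXiv:0909.1156 — 3 statements merged into one kernel-verified Lean document; each statement's English description precedes it below -/
import Mathlib

section
/- Let λ be the canonical additive character of F_q and let a ∈ F_q^*. Then ∑_{w∈O(3,q)} λ(a·Tr w) = (λ(a)+λ(-a))·q·K(λ;a²) = 2·Re(λ(a))·q·K(λ;a²), where Tr denotes the matrix trace and Re denotes the real part. -/
/-!
Every `w ∈ O(3,q)` lies in one of two Bruhat cells. If `w₁₀ = 0` then
`w = parabolicMatrix α β ε` with `α ≠ 0`, `ε = ±1` and trace `α + α⁻¹ + ε`; summing over the
free parameter `β` gives the factor `q`, and the substitution `α ↦ aα` turns the sum over `α`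
into `K(λ; a²)`. If `w₁₀ ≠ 0` then `w = bigCellMatrix α β γ ε`, whose trace is, in
characteristic 3, `α (γ + α⁻¹β)² + ε`. After shifting `γ`, the sum over the big cell factors
through `∑_{α ≠ 0} ∑_γ λ(aαγ²) = ∑_γ (q·[γ = 0] - 1) = 0`. Finally `λ(-a) = conj λ(a)`.
-/

open Finset Matrix

/-- The canonical additive character `λ(x) = e^{2πi·tr(x)/3}` of a finite field of
characteristic 3, where tr is the absolute trace to F_3. -/
noncomputable def canChar (F : Type) [Field F] [Fintype F] [Algebra (ZMod 3) F] (x : F) : ℂ :=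
  Complex.exp (2 * Real.pi * Complex.I * ((Algebra.trace (ZMod 3) F x).val : ℂ) / 3)

/-- The Kloosterman sum `K(λ;a) = ∑_{α ∈ F^*} λ(α + a·α⁻¹)` for the canonical character. -/
noncomputable def kloos (F : Type) [Field F] [Fintype F] [DecidableEq F]
    [Algebra (ZMod 3) F] (a : F) : ℂ :=
  ∑ α ∈ Finset.univ.filter (fun α : F => α ≠ 0), canChar F (α + a * α⁻¹)

/-- The matrix J defining the orthogonal group O(3,q). -/
def matJ (F : Type) [Field F] : Matrix (Fin 3) (Fin 3) F := !![0,1,0; 1,0,0; 0,0,1]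

section Character

variable (F : Type) [Field F] [Fintype F] [Algebra (ZMod 3) F]

noncomputable def canAddChar : AddChar F ℂ :=
  ZMod.stdAddChar.compAddMonoidHom (Algebra.trace (ZMod 3) F).toAddMonoidHom

theorem canAddChar_apply (x : F) : canAddChar F x = canChar F x := by
  rw [canAddChar, AddChar.compAddMonoidHom_apply, ZMod.stdAddChar_apply, ZMod.toCircle_apply]
  rfl

theorem isPrimitive_canAddChar : (canAddChar F).IsPrimitive := by
  have : Fact (Nat.Prime 3) := ⟨Nat.prime_three⟩
  have : Module.Finite (ZMod 3) F := Module.Finite.of_finite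
  obtain ⟨x, hx⟩ := DFunLike.ne_iff.mp (Algebra.trace_ne_zero (ZMod 3) F)
  refine AddChar.IsPrimitive.of_ne_one (AddChar.ne_one_iff.mpr ⟨x, fun h => hx ?_⟩)
  rw [← (canAddChar F).map_zero_eq_one] at h
  simpa using ZMod.injective_stdAddChar h

end Character

section CharacterSums

variable {F : Type*} [Field F] [Fintype F] [DecidableEq F]

theorem sum_ne_zero_comp_mul_add_mul_inv {M : Type*} [AddCommMonoid M] (g : F → M) {a : F}
    (ha : a ≠ 0) :
    ∑ α ∈ univ.filter (· ≠ 0), g (a * α + a * α⁻¹) =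
      ∑ α ∈ univ.filter (· ≠ 0), g (α + a ^ 2 * α⁻¹) := by
  refine sum_nbij' (a * ·) (a⁻¹ * ·) ?_ ?_ ?_ ?_ ?_ <;> intro α hα <;>
    simp only [mem_filter, mem_univ, true_and] at hα
  · simpa [ha] using hα
  · simpa [ha] using hα
  · simp [ha]
  · simp [ha]
  · field_simp

variable {R : Type*} [CommRing R] [IsDomain R] {ψ : AddChar F R}

theorem sum_ne_zero_addChar_mul (hψ : ψ.IsPrimitive) (x : F) :
    ∑ α ∈ univ.filter (· ≠ 0), ψ (α * x) = (if x = 0 then (Fintype.card F : R) else 0) - 1 := by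
  rw [filter_ne', sum_erase_eq_sub (mem_univ 0), AddChar.sum_mulShift x hψ, zero_mul,
    AddChar.map_zero_eq_one, Nat.cast_ite, Nat.cast_zero]

theorem sum_ne_zero_sum_addChar_mul_sq (hψ : ψ.IsPrimitive) {a : F} (ha : a ≠ 0) :
    ∑ α ∈ univ.filter (· ≠ 0), ∑ γ : F, ψ (α * (a * γ ^ 2)) = 0 := by
  rw [sum_comm]
  simp only [sum_ne_zero_addChar_mul hψ, mul_eq_zero, ha, false_or, pow_eq_zero_iff two_ne_zero,
    sum_sub_distrib, sum_ite_eq', mem_univ, if_true, sum_const, card_univ, nsmul_eq_mul, mul_one,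
    sub_self]

end CharacterSums

section Orthogonal

variable {F : Type} [Field F]

def IsJOrthogonal (w : Matrix (Fin 3) (Fin 3) F) : Prop := wᵀ * matJ F * w = matJ F

theorem matJ_mul_self : matJ F * matJ F = 1 := by
  rw [matJ, mul_fin_three, one_fin_three]
  norm_num

theorem det_matJ : (matJ F).det = -1 := by
  simp [matJ, det_fin_three]

theorem IsJOrthogonal.det_mul_self {w : Matrix (Fin 3) (Fin 3) F} (hw : IsJOrthogonal w) :
    w.det * w.det = 1 := by
  have h := congrArg det hw
  rw [det_mul, det_mul, det_transpose, det_matJ] at h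
  linear_combination -h

theorem IsJOrthogonal.mul_matJ_mul_transpose {w : Matrix (Fin 3) (Fin 3) F}
    (hw : IsJOrthogonal w) : w * matJ F * wᵀ = matJ F := by
  have hleft : (matJ F * wᵀ * matJ F) * w = 1 := by
    rw [Matrix.mul_assoc (matJ F), Matrix.mul_assoc (matJ F),
      show wᵀ * matJ F * w = matJ F from hw, matJ_mul_self]
  calc w * matJ F * wᵀ = w * (matJ F * wᵀ * matJ F) * matJ F := by
        simp only [Matrix.mul_assoc, matJ_mul_self, Matrix.mul_one]
    _ = matJ F := by rw [mul_eq_one_comm.mp hleft, Matrix.one_mul]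

def orthogonalMatrices (F : Type) [Field F] [Fintype F] [DecidableEq F] :
    Finset (Matrix (Fin 3) (Fin 3) F) :=
  univ.filter fun w => w.det ≠ 0 ∧ wᵀ * matJ F * w = matJ F

theorem mem_orthogonalMatrices [Fintype F] [DecidableEq F] {w : Matrix (Fin 3) (Fin 3) F} :
    w ∈ orthogonalMatrices F ↔ IsJOrthogonal w := by
  refine ⟨fun h => (mem_filter.mp h).2.2, fun hw => mem_filter.mpr ⟨mem_univ w, ?_, hw⟩⟩
  exact left_ne_zero_of_mul_eq_one hw.det_mul_self

theorem mem_one_neg_one_iff [DecidableEq F] {ε : F} :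
    ε ∈ ({1, -1} : Finset F) ↔ ε * ε = 1 := by
  rw [mem_insert, mem_singleton, mul_self_eq_one_iff]

end Orthogonal

section Cells

variable {F : Type} [Field F]

def parabolicMatrix (α β ε : F) : Matrix (Fin 3) (Fin 3) F :=
  !![α, α * β ^ 2, -(α * β * ε); 0, α⁻¹, 0; 0, β, ε]

def bigCellMatrix (α β γ ε : F) : Matrix (Fin 3) (Fin 3) F :=
  !![α * γ ^ 2, α + α * γ ^ 2 * β ^ 2 - α * γ * ε * β, -(α * γ ^ 2 * β) - α * γ * ε;
     α⁻¹, α⁻¹ * β ^ 2, -(α⁻¹ * β);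
     γ, γ * β ^ 2 + ε * β, -(γ * β) + ε]

theorem det_parabolicMatrix (α β ε : F) : (parabolicMatrix α β ε).det = α * α⁻¹ * ε := by
  simp [parabolicMatrix, det_fin_three]

theorem det_bigCellMatrix {α : F} (hα : α ≠ 0) (β γ ε : F) :
    (bigCellMatrix α β γ ε).det = -ε := by
  have hα' : α * α⁻¹ = 1 := mul_inv_cancel₀ hα
  rw [bigCellMatrix, det_fin_three]
  simp only [of_apply, cons_val', cons_val_zero, cons_val_one, cons_val_two, empty_val',
    cons_val_fin_one, head_cons, tail_cons, head_fin_const]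
  linear_combination (-ε) * hα'

theorem trace_parabolicMatrix (α β ε : F) :
    (parabolicMatrix α β ε).trace = α + α⁻¹ + ε := by
  simp [parabolicMatrix, trace_fin_three]

variable [CharP F 3]

theorem trace_bigCellMatrix {α : F} (hα : α ≠ 0) (β γ ε : F) :
    (bigCellMatrix α β γ ε).trace = α * (γ + α⁻¹ * β) ^ 2 + ε := by
  have h3 : (3 : F) = 0 := CharP.ofNat_eq_zero F 3
  have hα' : α * α⁻¹ = 1 := mul_inv_cancel₀ hα
  rw [bigCellMatrix, trace_fin_three]
  simp only [of_apply, cons_val', cons_val_zero, cons_val_one, cons_val_two, empty_val',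
    cons_val_fin_one, head_cons, tail_cons, head_fin_const]
  linear_combination (-(γ * β)) * h3 + (-(2 * γ * β) - α⁻¹ * β ^ 2) * hα'

theorem isJOrthogonal_parabolicMatrix {α : F} (hα : α ≠ 0) (β : F) {ε : F} (hε : ε * ε = 1) :
    IsJOrthogonal (parabolicMatrix α β ε) := by
  have h3 : (3 : F) = 0 := CharP.ofNat_eq_zero F 3
  have hα' : α * α⁻¹ = 1 := mul_inv_cancel₀ hα
  unfold IsJOrthogonal parabolicMatrix
  generalize α⁻¹ = α' at hα' ⊢
  ext i j
  fin_cases i <;> fin_cases j <;>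
    simp [matJ, mul_apply, Fin.sum_univ_three] <;>
    first
      | linear_combination hα'
      | linear_combination (2 * β ^ 2) * hα' + β ^ 2 * h3
      | linear_combination (-(β * ε)) * hα'
      | linear_combination hε

theorem isJOrthogonal_bigCellMatrix {α : F} (hα : α ≠ 0) (β γ : F) {ε : F} (hε : ε * ε = 1) :
    IsJOrthogonal (bigCellMatrix α β γ ε) := by
  have h3 : (3 : F) = 0 := CharP.ofNat_eq_zero F 3
  have hα' : α * α⁻¹ = 1 := mul_inv_cancel₀ hα
  unfold IsJOrthogonal bigCellMatrix
  generalize α⁻¹ = α' at hα' ⊢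
  ext i j
  fin_cases i <;> fin_cases j <;>
    simp [matJ, mul_apply, Fin.sum_univ_three] <;>
    first
      | linear_combination (2 * γ ^ 2) * hα' + γ ^ 2 * h3
      | linear_combination (1 - β * γ * ε + 2 * β ^ 2 * γ ^ 2) * hα' + (β ^ 2 * γ ^ 2) * h3
      | linear_combination (-(γ * ε) - 2 * β * γ ^ 2) * hα' + (-(β * γ ^ 2)) * h3
      | linear_combination (2 * β ^ 2 - 2 * β ^ 3 * γ * ε + 2 * β ^ 4 * γ ^ 2) * hα' + β ^ 2 * hε
          + (β ^ 2 + β ^ 4 * γ ^ 2) * h3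
      | linear_combination (-β - 2 * β ^ 3 * γ ^ 2) * hα' + β * hε + (-(β ^ 3 * γ ^ 2)) * h3
      | linear_combination (2 * β * γ * ε + 2 * β ^ 2 * γ ^ 2) * hα' + hε + (β ^ 2 * γ ^ 2) * h3

theorem isJOrthogonal_parabolicMatrix_iff {α β ε : F} :
    IsJOrthogonal (parabolicMatrix α β ε) ↔ α ≠ 0 ∧ ε * ε = 1 := by
  refine ⟨fun hw => ?_, fun ⟨hα, hε⟩ => isJOrthogonal_parabolicMatrix hα β hε⟩
  have hdet := hw.det_mul_self
  rw [det_parabolicMatrix] at hdet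
  have hα : α ≠ 0 := by
    rintro rfl
    simp at hdet
  refine ⟨hα, ?_⟩
  rwa [mul_inv_cancel₀ hα, one_mul] at hdet

theorem isJOrthogonal_bigCellMatrix_iff {α : F} (hα : α ≠ 0) {β γ ε : F} :
    IsJOrthogonal (bigCellMatrix α β γ ε) ↔ ε * ε = 1 := by
  refine ⟨fun hw => ?_, isJOrthogonal_bigCellMatrix hα β γ⟩
  simpa [det_bigCellMatrix hα] using hw.det_mul_self

theorem IsJOrthogonal.eq_parabolicMatrix {w : Matrix (Fin 3) (Fin 3) F} (hw : IsJOrthogonal w)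
    (h10 : w 1 0 = 0) : w = parabolicMatrix (w 0 0) (w 2 1) (w 2 2) := by
  have h3 : (3 : F) = 0 := CharP.ofNat_eq_zero F 3
  have e00 := congrFun (congrFun hw 0) 0
  have e01 := congrFun (congrFun hw 0) 1
  have e02 := congrFun (congrFun hw 0) 2
  have e11 := congrFun (congrFun hw 1) 1
  have e12 := congrFun (congrFun hw 1) 2
  simp only [matJ, mul_apply, transpose_apply, of_apply, cons_val', cons_val_fin_one,
    Fin.sum_univ_three, cons_val_zero, cons_val_one, Matrix.cons_val, mul_zero, mul_one, zero_add,
    add_zero] at e00 e01 e02 e11 e12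
  have h20 : w 2 0 = 0 := mul_self_eq_zero.mp (by linear_combination e00 - 2 * w 0 0 * h10)
  have h11 : w 0 0 * w 1 1 = 1 := by linear_combination e01 - w 0 1 * h10 - w 2 1 * h20
  have h12 : w 1 2 = 0 := by
    have h : w 0 0 * w 1 2 = 0 := by linear_combination e02 - w 0 2 * h10 - w 2 2 * h20
    exact (mul_eq_zero.mp h).resolve_left (left_ne_zero_of_mul_eq_one h11)
  have h01 : w 0 1 = w 0 0 * w 2 1 ^ 2 := by
    linear_combination -w 0 0 * e11 + 2 * w 0 1 * h11 + w 0 1 * h3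
  have h02 : w 0 2 = -(w 0 0 * w 2 1 * w 2 2) := by
    linear_combination w 0 0 * e12 - w 0 2 * h11 - w 0 0 * w 0 1 * h12
  ext i j
  fin_cases i <;> fin_cases j <;> simp [parabolicMatrix] <;>
    first | assumption | exact eq_inv_of_mul_eq_one_right h11

theorem IsJOrthogonal.eq_bigCellMatrix {w : Matrix (Fin 3) (Fin 3) F} (hw : IsJOrthogonal w)
    (h10 : w 1 0 ≠ 0) :
    w = bigCellMatrix (w 1 0)⁻¹ (-(w 1 2) * (w 1 0)⁻¹) (w 2 0)
      (w 2 2 - w 2 0 * w 1 2 * (w 1 0)⁻¹) := by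
  have h3 : (3 : F) = 0 := CharP.ofNat_eq_zero F 3
  have hw' := hw.mul_matJ_mul_transpose
  have e00 := congrFun (congrFun hw 0) 0
  have e01 := congrFun (congrFun hw 0) 1
  have e02 := congrFun (congrFun hw 0) 2
  have r11 := congrFun (congrFun hw' 1) 1
  have r12 := congrFun (congrFun hw' 1) 2
  simp only [matJ, mul_apply, transpose_apply, of_apply, cons_val', cons_val_fin_one,
    Fin.sum_univ_three, cons_val_zero, cons_val_one, Matrix.cons_val, mul_zero, mul_one, zero_add,
    add_zero] at e00 e01 e02 r11 r12
  set u := w 1 0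
  set v := u⁻¹
  have huv : u * v = 1 := mul_inv_cancel₀ h10
  have f1 : w 0 0 * u = w 2 0 ^ 2 := by linear_combination -e00 + w 0 0 * u * h3
  have f2 : w 1 1 * u = w 1 2 ^ 2 := by linear_combination -r11 + w 1 1 * u * h3
  have f3 : w 2 1 * u ^ 2 = -(w 1 2 ^ 2 * w 2 0) - w 1 2 * w 2 2 * u := by
    linear_combination u * r12 - w 2 0 * f2
  ext i j
  fin_cases i <;> fin_cases j <;> simp [bigCellMatrix, v] <;>
    first
      | rfl
      | ring1
      | linear_combination v * f1 - w 0 0 * huv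
      | linear_combination (u * v ^ 2) * e01 - (v ^ 2 * w 1 1) * f1 - (v ^ 3 * w 2 0 ^ 2) * f2
          - (v ^ 3 * w 2 0) * f3 + (v ^ 2 * w 2 0 ^ 2 * w 1 1 + u * v ^ 2 * w 2 0 * w 2 1
            - w 0 1 * (u * v + 1) + w 2 0 * w 1 2 * w 2 2 * v ^ 2 + v) * huv
      | linear_combination v * e02 - (v ^ 2 * w 1 2) * f1 + (v * w 0 0 * w 1 2 - w 0 2) * huv
          - (v ^ 2 * w 1 2 * w 2 0 ^ 2) * h3
      | linear_combination (-(w 1 1) * (u * v + 1)) * huv + (u * v ^ 2) * f2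
      | linear_combination (-(w 1 2)) * huv
      | linear_combination v ^ 2 * f3 - (w 2 1 * (u * v + 1)) * huv
          - (w 2 0 * w 1 2 ^ 2 * v ^ 2) * h3 - (w 1 2 * w 2 2 * v) * huv

variable [Fintype F] [DecidableEq F] {M : Type*} [AddCommMonoid M]

theorem sum_parabolicCell (g : F → M) :
    ∑ w ∈ (orthogonalMatrices F).filter (fun w => w 1 0 = 0), g w.trace =
      Fintype.card F • ∑ ε ∈ ({1, -1} : Finset F), ∑ α ∈ univ.filter (· ≠ 0), g (α + α⁻¹ + ε) := by
  rw [← card_univ, ← sum_const, sum_comm]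
  simp only [← sum_product']
  refine sum_nbij' (fun w => (w 2 2, w 2 1, w 0 0))
    (fun p => parabolicMatrix p.2.2 p.2.1 p.1) ?_ ?_ ?_ ?_ ?_
  · intro w hw
    simp only [mem_filter, mem_orthogonalMatrices] at hw
    obtain ⟨hw, h10⟩ := hw
    have hparams := hw
    rw [hw.eq_parabolicMatrix h10, isJOrthogonal_parabolicMatrix_iff] at hparams
    simp only [mem_product, mem_filter, mem_univ, true_and, mem_one_neg_one_iff]
    exact ⟨hparams.2, hparams.1⟩
  · intro p hp
    simp only [mem_product, mem_filter, mem_univ, true_and, mem_one_neg_one_iff] at hp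
    simp only [mem_filter, mem_orthogonalMatrices, isJOrthogonal_parabolicMatrix_iff]
    exact ⟨⟨hp.2, hp.1⟩, rfl⟩
  · intro w hw
    simp only [mem_filter, mem_orthogonalMatrices] at hw
    exact (hw.1.eq_parabolicMatrix hw.2).symm
  · intro p _
    simp [parabolicMatrix]
  · intro w hw
    simp only [mem_filter, mem_orthogonalMatrices] at hw
    rw [← trace_parabolicMatrix (w 0 0) (w 2 1), ← hw.1.eq_parabolicMatrix hw.2]

theorem sum_bigCell (g : F → M) :
    ∑ w ∈ (orthogonalMatrices F).filter (fun w => ¬ w 1 0 = 0), g w.trace =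
      ∑ ε ∈ ({1, -1} : Finset F), ∑ β : F, ∑ α ∈ univ.filter (· ≠ 0), ∑ γ : F,
        g (α * (γ + α⁻¹ * β) ^ 2 + ε) := by
  simp only [← sum_product']
  refine sum_nbij'
    (fun w => (w 2 2 - w 2 0 * w 1 2 * (w 1 0)⁻¹, -(w 1 2) * (w 1 0)⁻¹, (w 1 0)⁻¹, w 2 0))
    (fun p => bigCellMatrix p.2.2.1 p.2.1 p.2.2.2 p.1) ?_ ?_ ?_ ?_ ?_
  · intro w hw
    simp only [mem_filter, mem_orthogonalMatrices] at hw
    obtain ⟨hw, h10⟩ := hw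
    have hε := hw
    rw [hw.eq_bigCellMatrix h10, isJOrthogonal_bigCellMatrix_iff (inv_ne_zero h10)] at hε
    simp only [mem_product, mem_filter, mem_univ, true_and, and_true, mem_one_neg_one_iff]
    exact ⟨hε, inv_ne_zero h10⟩
  · intro p hp
    simp only [mem_product, mem_filter, mem_univ, true_and, and_true, mem_one_neg_one_iff] at hp
    simp only [mem_filter, mem_orthogonalMatrices, isJOrthogonal_bigCellMatrix_iff hp.2]
    exact ⟨hp.1, by simpa [bigCellMatrix] using hp.2⟩
  · intro w hw
    simp only [mem_filter, mem_orthogonalMatrices] at hw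
    exact (hw.1.eq_bigCellMatrix hw.2).symm
  · rintro ⟨ε, β, α, γ⟩ hp
    simp only [mem_product, mem_filter, mem_univ, true_and, and_true] at hp
    have hα : α⁻¹ * α = 1 := inv_mul_cancel₀ hp.2
    simp only [bigCellMatrix, of_apply, cons_val', cons_val_zero, cons_val_one, cons_val_two,
      empty_val', cons_val_fin_one, head_cons, tail_cons, head_fin_const, inv_inv,
      neg_neg, Prod.mk.injEq, and_true]
    exact ⟨by linear_combination γ * β * hα, by linear_combination β * hα⟩
  · intro w hw
    simp only [mem_filter, mem_orthogonalMatrices] at hw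
    rw [← trace_bigCellMatrix (inv_ne_zero hw.2), ← hw.1.eq_bigCellMatrix hw.2]

end Cells

theorem sum_orthogonalMatrices_addChar_mul_trace {F : Type} [Field F] [Fintype F]
    [DecidableEq F] [CharP F 3] {R : Type*} [CommRing R] [IsDomain R] {ψ : AddChar F R}
    (hψ : ψ.IsPrimitive) {a : F} (ha : a ≠ 0) :
    ∑ w ∈ orthogonalMatrices F, ψ (a * w.trace) =
      (ψ a + ψ (-a)) * Fintype.card F * ∑ α ∈ univ.filter (· ≠ 0), ψ (α + a ^ 2 * α⁻¹) := by
  have hparabolic (ε : F) : ∑ α ∈ univ.filter (· ≠ 0), ψ (a * (α + α⁻¹ + ε)) =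
      ψ (a * ε) * ∑ α ∈ univ.filter (· ≠ 0), ψ (α + a ^ 2 * α⁻¹) := by
    simp only [← sum_ne_zero_comp_mul_add_mul_inv ψ ha, mul_sum, ← AddChar.map_add_eq_mul]
    exact sum_congr rfl fun α _ => by ring_nf
  have hbig (ε β : F) :
      ∑ α ∈ univ.filter (· ≠ 0), ∑ γ : F, ψ (a * (α * (γ + α⁻¹ * β) ^ 2 + ε)) = 0 := by
    calc ∑ α ∈ univ.filter (· ≠ 0), ∑ γ : F, ψ (a * (α * (γ + α⁻¹ * β) ^ 2 + ε))
        = ∑ α ∈ univ.filter (· ≠ 0), ∑ γ : F, ψ (α * (a * γ ^ 2)) * ψ (a * ε) := by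
          refine sum_congr rfl fun α _ => ?_
          rw [← (Equiv.subRight (α⁻¹ * β)).sum_comp]
          simp only [Equiv.subRight_apply, ← AddChar.map_add_eq_mul]
          exact sum_congr rfl fun γ _ => by ring_nf
      _ = 0 := by simp only [← sum_mul, sum_ne_zero_sum_addChar_mul_sq hψ ha, zero_mul]
  have h3 : (3 : F) = 0 := CharP.ofNat_eq_zero F 3
  have hsigns : (1 : F) ≠ -1 := fun h => one_ne_zero (by linear_combination h3 - h : (1 : F) = 0)
  rw [← sum_filter_add_sum_filter_not _ (fun w => w 1 0 = 0),
    sum_parabolicCell fun t => ψ (a * t), sum_bigCell fun t => ψ (a * t)]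
  simp only [hparabolic, hbig, sum_const_zero, add_zero, sum_pair hsigns, mul_one, mul_neg_one,
    nsmul_eq_mul]
  ring

theorem gauss_sum_O3_twisted_general (r : ℕ) (F : Type) [Field F] [Fintype F]
    [DecidableEq F] [Algebra (ZMod 3) F] (hF : Fintype.card F = 3 ^ r)
    (a : F) (ha : a ≠ 0) :
    (∑ w ∈ Finset.univ.filter
        (fun w : Matrix (Fin 3) (Fin 3) F =>
          w.det ≠ 0 ∧ wᵀ * matJ F * w = matJ F),
      canChar F (a * w.trace)
      = (canChar F a + canChar F (-a)) * (3 ^ r : ℂ) * kloos F (a ^ 2)) ∧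
    (∑ w ∈ Finset.univ.filter
        (fun w : Matrix (Fin 3) (Fin 3) F =>
          w.det ≠ 0 ∧ wᵀ * matJ F * w = matJ F),
      canChar F (a * w.trace)
      = 2 * ((canChar F a).re : ℂ) * (3 ^ r : ℂ) * kloos F (a ^ 2)) := by
  have : CharP F 3 := charP_of_injective_algebraMap' (ZMod 3) 3
  have hsum := sum_orthogonalMatrices_addChar_mul_trace (isPrimitive_canAddChar F) ha
  simp only [canAddChar_apply, hF, Nat.cast_pow, Nat.cast_ofNat] at hsum
  have hre : canChar F a + canChar F (-a) = 2 * ((canChar F a).re : ℂ) := by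
    rw [← canAddChar_apply, ← canAddChar_apply, AddChar.map_neg_eq_conj, Complex.add_conj]
    push_cast
    ring
  exact ⟨hsum, hre ▸ hsum⟩

/-- `∑_{w ∈ O(3,q)} λ(a·Tr w) = (λ(a)+λ(-a))·q·K(λ;a²) = 2·Re(λ(a))·q·K(λ;a²)` for the
canonical additive character λ and any a ∈ F_q^*, where q = 3^r. -/
theorem gauss_sum_O3_twisted (r : ℕ) (hr : 0 < r) (F : Type) [Field F] [Fintype F]
    [DecidableEq F] [Algebra (ZMod 3) F] (hF : Fintype.card F = 3 ^ r)
    (a : F) (ha : a ≠ 0) :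
    (∑ w ∈ Finset.univ.filter
        (fun w : Matrix (Fin 3) (Fin 3) F =>
          w.det ≠ 0 ∧ wᵀ * matJ F * w = matJ F),
      canChar F (a * w.trace)
      = (canChar F a + canChar F (-a)) * (3 ^ r : ℂ) * kloos F (a ^ 2)) ∧
    (∑ w ∈ Finset.univ.filter
        (fun w : Matrix (Fin 3) (Fin 3) F =>
          w.det ≠ 0 ∧ wᵀ * matJ F * w = matJ F),
      canChar F (a * w.trace)
      = 2 * ((canChar F a).re : ℂ) * (3 ^ r : ℂ) * kloos F (a ^ 2)) :=
  gauss_sum_O3_twisted_general r F hF a ha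
end

section
/- The matrix trace maps Tr : SO(3,q) → F_q and Tr : O(3,q) → F_q are surjective; that is, for every β ∈ F_q there exists w ∈ SO(3,q) with Tr(w) = β, and there exists w ∈ O(3,q) with Tr(w) = β. -/
/-!
Every `w = s · diag(t, t⁻¹, 1) · u(b)`, with `s` the Weyl element of the hyperbolic plane and `u(b)`
a root unipotent, lies in `SO(3)` and has trace `-2 t b² - 1`. When `2 ≠ 0` this covers every value:
`b = 0` gives `-1`, and `b = 1`, `t = -(β + 1) / 2` gives any `β ≠ -1`. In characteristic `3`,
`2 = -1 ≠ 0`.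
-/

open Matrix

theorem transpose_mul_mul_mul_eq_of_transpose_mul_mul_eq {n R : Type*} [Fintype n] [CommRing R]
    {J v w : Matrix n n R} (hv : vᵀ * J * v = J) (hw : wᵀ * J * w = J) :
    (v * w)ᵀ * J * (v * w) = J :=
  calc (v * w)ᵀ * J * (v * w) = wᵀ * (vᵀ * J * v) * w := by simp only [transpose_mul, Matrix.mul_assoc]
    _ = J := by rw [hv, hw]

section OrthogonalElements

variable {F : Type} [Field F]

def weylJ (F : Type) [Field F] : Matrix (Fin 3) (Fin 3) F := !![0,1,0; 1,0,0; 0,0,-1]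

def torusJ (t : F) : Matrix (Fin 3) (Fin 3) F := !![t,0,0; 0,t⁻¹,0; 0,0,1]

def unipotentJ (b : F) : Matrix (Fin 3) (Fin 3) F := !![1,-2*b^2,2*b; 0,1,0; 0,-2*b,1]

theorem weylJ_transpose_mul_matJ_mul : (weylJ F)ᵀ * matJ F * weylJ F = matJ F := by
  ext i j
  fin_cases i <;> fin_cases j <;> simp [weylJ, matJ, mul_apply, Fin.sum_univ_three]

theorem det_weylJ : (weylJ F).det = 1 := by
  simp [weylJ, det_fin_three]

theorem torusJ_transpose_mul_matJ_mul {t : F} (ht : t ≠ 0) :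
    (torusJ t)ᵀ * matJ F * torusJ t = matJ F := by
  ext i j
  fin_cases i <;> fin_cases j <;> simp [torusJ, matJ, mul_apply, Fin.sum_univ_three, ht]

theorem det_torusJ {t : F} (ht : t ≠ 0) : (torusJ t).det = 1 := by
  simp [torusJ, det_fin_three, ht]

theorem unipotentJ_transpose_mul_matJ_mul (b : F) :
    (unipotentJ b)ᵀ * matJ F * unipotentJ b = matJ F := by
  ext i j
  fin_cases i <;> fin_cases j <;> simp [unipotentJ, matJ, mul_apply, Fin.sum_univ_three]; ring

theorem det_unipotentJ (b : F) : (unipotentJ b).det = 1 := by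
  simp [unipotentJ, det_fin_three]

theorem trace_weylJ_mul_torusJ_mul_unipotentJ (t b : F) :
    (weylJ F * torusJ t * unipotentJ b).trace = -2 * t * b ^ 2 - 1 := by
  simp [weylJ, torusJ, unipotentJ, trace_fin_three]; ring

theorem exists_det_eq_one_transpose_mul_matJ_mul_trace_eq {t : F} (ht : t ≠ 0) (b : F) :
    ∃ w : Matrix (Fin 3) (Fin 3) F,
      w.det = 1 ∧ wᵀ * matJ F * w = matJ F ∧ w.trace = -2 * t * b ^ 2 - 1 := by
  refine ⟨weylJ F * torusJ t * unipotentJ b, ?_, ?_, trace_weylJ_mul_torusJ_mul_unipotentJ t b⟩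
  · simp only [det_mul, det_weylJ, det_torusJ ht, det_unipotentJ, one_mul]
  · refine transpose_mul_mul_mul_eq_of_transpose_mul_mul_eq
      (transpose_mul_mul_mul_eq_of_transpose_mul_mul_eq weylJ_transpose_mul_matJ_mul
        (torusJ_transpose_mul_matJ_mul ht)) (unipotentJ_transpose_mul_matJ_mul b)

theorem exists_det_eq_one_transpose_mul_matJ_mul_trace_eq_of_two_ne_zero (h2 : (2 : F) ≠ 0)
    (β : F) : ∃ w : Matrix (Fin 3) (Fin 3) F,
      w.det = 1 ∧ wᵀ * matJ F * w = matJ F ∧ w.trace = β := by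
  by_cases hβ : β + 1 = 0
  · simpa [eq_neg_of_add_eq_zero_left hβ] using
      exists_det_eq_one_transpose_mul_matJ_mul_trace_eq (one_ne_zero (α := F)) 0
  · have ht : -(β + 1) / 2 ≠ 0 := div_ne_zero (neg_ne_zero.mpr hβ) h2
    obtain ⟨w, hdet, hJ, htr⟩ := exists_det_eq_one_transpose_mul_matJ_mul_trace_eq ht 1
    refine ⟨w, hdet, hJ, ?_⟩
    rw [htr]
    field_simp
    ring

end OrthogonalElements

theorem two_ne_zero_of_card_eq_three_pow {F : Type} [Field F] [Fintype F] {r : ℕ}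
    (hF : Fintype.card F = 3 ^ r) : (2 : F) ≠ 0 := by
  have h3 : (3 : F) = 0 := by
    have hcard := FiniteField.cast_card_eq_zero F
    rw [hF, Nat.cast_pow, Nat.cast_ofNat] at hcard
    exact eq_zero_of_pow_eq_zero hcard
  intro h2
  exact one_ne_zero (by linear_combination h3 - h2 : (1 : F) = 0)

theorem trace_surjective_SO3_O3_general (r : ℕ) (F : Type) [Field F] [Fintype F]
    (hF : Fintype.card F = 3 ^ r) (β : F) :
    (∃ w : Matrix (Fin 3) (Fin 3) F,
      w.det ≠ 0 ∧ wᵀ * matJ F * w = matJ F ∧ w.det = 1 ∧ w.trace = β) ∧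
    (∃ w : Matrix (Fin 3) (Fin 3) F,
      w.det ≠ 0 ∧ wᵀ * matJ F * w = matJ F ∧ w.trace = β) := by
  obtain ⟨w, hdet, hJ, htr⟩ :=
    exists_det_eq_one_transpose_mul_matJ_mul_trace_eq_of_two_ne_zero
      (two_ne_zero_of_card_eq_three_pow hF) β
  have hdet_ne : w.det ≠ 0 := hdet ▸ one_ne_zero
  exact ⟨⟨w, hdet_ne, hJ, hdet, htr⟩, ⟨w, hdet_ne, hJ, htr⟩⟩

/-- The trace maps `Tr : SO(3,q) → F_q` and `Tr : O(3,q) → F_q` are surjective,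
where q = 3^r. -/
theorem trace_surjective_SO3_O3 (r : ℕ) (hr : 0 < r) (F : Type) [Field F] [Fintype F]
    [DecidableEq F] (hF : Fintype.card F = 3 ^ r) (β : F) :
    (∃ w : Matrix (Fin 3) (Fin 3) F,
      w.det ≠ 0 ∧ wᵀ * matJ F * w = matJ F ∧ w.det = 1 ∧ w.trace = β) ∧
    (∃ w : Matrix (Fin 3) (Fin 3) F,
      w.det ≠ 0 ∧ wᵀ * matJ F * w = matJ F ∧ w.trace = β) :=
  trace_surjective_SO3_O3_general r F hF β
end

section
/- The first moment of Kloosterman sums with trace nonzero square arguments satisfies T₁₂SK = ∑_{a∈F_q^*, tr(a)≠0} K(λ;a²) = (2/3)·(-1)^r·q. -/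
/-!
Substituting `α = aβ` turns `K(λ; a²)` into `∑_{β ≠ 0} λ(a(β + β⁻¹))`, so after swapping the sums
the inner sum runs over `{a | tr a ≠ 0}`, which is `F` minus the hyperplane `ker tr`. Writing the
indicator of `ker tr` as `(1/3) ∑_{t ∈ 𝔽₃} λ(t a)`, the inner sum becomes
`q·[u = 0] - (q/3)·[u ∈ 𝔽₃]` with `u = β + β⁻¹`. In characteristic 3, `β + β⁻¹ = 0` iff `β² = -1`,
which has `1 + χ(-1) = 1 + (-1)^r` solutions, and `β + β⁻¹ = ±1` iff `β = ∓1`. Hence the sum is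
`q(1 + (-1)^r) - (q/3)(3 + (-1)^r) = (2/3)(-1)^r q`.
-/

open Finset

section TraceChar

variable (p : ℕ) [Fact p.Prime] (F : Type*) [Field F] [Algebra (ZMod p) F]

noncomputable def traceChar : AddChar F ℂ :=
  ZMod.stdAddChar.compAddMonoidHom (Algebra.trace (ZMod p) F).toAddMonoidHom

lemma traceChar_apply (x : F) :
    traceChar p F x = ZMod.stdAddChar (Algebra.trace (ZMod p) F x) := rfl

lemma sum_ite_add_algebraMap_eq_zero [DecidableEq F] (u : F) (c : ℂ) :
    ∑ t : ZMod p, (if u + algebraMap (ZMod p) F t = 0 then c else 0)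
      = if u ∈ Set.range (algebraMap (ZMod p) F) then c else 0 := by
  split_ifs with hu
  · obtain ⟨s, rfl⟩ := hu
    simp_rw [← map_add, map_eq_zero_iff _ (algebraMap (ZMod p) F).injective,
      add_eq_zero_iff_neg_eq, sum_ite_eq, mem_univ, if_true]
  · refine sum_eq_zero fun t _ => if_neg fun h => hu ⟨-t, ?_⟩
    rw [map_neg, neg_eq_of_add_eq_zero_left h]

variable [Fintype F]

lemma isPrimitive_traceChar : (traceChar p F).IsPrimitive := by
  intro a ha hψ
  obtain ⟨b, hb⟩ : ∃ b, Algebra.trace (ZMod p) F (a * b) ≠ 0 := by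
    by_contra! h
    exact ha ((traceForm_nondegenerate (ZMod p) F).1 a h)
  refine hb (ZMod.injective_stdAddChar ?_)
  simpa [traceChar_apply] using DFunLike.congr_fun hψ b

variable [DecidableEq F]

lemma sum_stdAddChar_mul (s : ZMod p) :
    ∑ t : ZMod p, ZMod.stdAddChar (t * s) = if s = 0 then (p : ℂ) else 0 := by
  simpa using AddChar.sum_mulShift s (ZMod.isPrimitive_stdAddChar p)

lemma sum_traceChar_mul (u : F) :
    ∑ a, traceChar p F (a * u) = if u = 0 then (Fintype.card F : ℂ) else 0 := by
  simpa using AddChar.sum_mulShift u (isPrimitive_traceChar p F)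

lemma sum_traceChar_mul_of_trace_eq_zero (u : F) :
    ∑ a ∈ univ.filter (fun a => Algebra.trace (ZMod p) F a = 0), traceChar p F (a * u)
      = if u ∈ Set.range (algebraMap (ZMod p) F) then (Fintype.card F / p : ℂ) else 0 := by
  have hp : (p : ℂ) ≠ 0 := Nat.cast_ne_zero.mpr (Fact.out : p.Prime).ne_zero
  have indicator (a : F) : (if Algebra.trace (ZMod p) F a = 0 then traceChar p F (a * u) else 0)
      = (p : ℂ)⁻¹ * ∑ t : ZMod p, traceChar p F (a * (u + algebraMap (ZMod p) F t)) := by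
    have hshift (t : ZMod p) : traceChar p F (a * algebraMap (ZMod p) F t)
        = ZMod.stdAddChar (t * Algebra.trace (ZMod p) F a) := by
      rw [traceChar_apply, mul_comm, ← Algebra.smul_def, map_smul, smul_eq_mul]
    simp_rw [mul_add, AddChar.map_add_eq_mul, ← mul_sum, hshift, sum_stdAddChar_mul]
    split_ifs
    · field_simp
    · simp
  calc _ = ∑ a, (p : ℂ)⁻¹ * ∑ t : ZMod p, traceChar p F (a * (u + algebraMap (ZMod p) F t)) := by
        rw [sum_filter]; exact sum_congr rfl fun a _ => indicator a
    _ = (p : ℂ)⁻¹ * ∑ t : ZMod p,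
          if u + algebraMap (ZMod p) F t = 0 then (Fintype.card F : ℂ) else 0 := by
        rw [← mul_sum, sum_comm]; simp_rw [sum_traceChar_mul]
    _ = _ := by
        rw [sum_ite_add_algebraMap_eq_zero]; split_ifs <;> ring

lemma sum_traceChar_mul_of_trace_ne_zero (u : F) :
    ∑ a ∈ univ.filter (fun a => Algebra.trace (ZMod p) F a ≠ 0), traceChar p F (a * u)
      = (if u = 0 then (Fintype.card F : ℂ) else 0)
        - if u ∈ Set.range (algebraMap (ZMod p) F) then (Fintype.card F / p : ℂ) else 0 := by
  rw [← sum_traceChar_mul p F, ← sum_traceChar_mul_of_trace_eq_zero p F,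
    ← sum_filter_add_sum_filter_not univ (fun a => Algebra.trace (ZMod p) F a = 0)]
  ring

end TraceChar

lemma canChar_eq_traceChar (F : Type) [Field F] [Fintype F] [Algebra (ZMod 3) F] :
    canChar F = traceChar 3 F := by
  ext x
  rw [canChar, traceChar_apply, ZMod.stdAddChar_apply, ZMod.toCircle_apply]
  push_cast
  rfl

lemma kloos_sq_eq_sum_canChar (F : Type) [Field F] [Fintype F] [DecidableEq F]
    [Algebra (ZMod 3) F] {a : F} (ha : a ≠ 0) :
    kloos F (a ^ 2) = ∑ β ∈ univ.filter (fun β : F => β ≠ 0), canChar F (a * (β + β⁻¹)) := by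
  refine sum_nbij' (a⁻¹ * ·) (a * ·) ?_ ?_ ?_ ?_ ?_ <;> intro α hα
  · simpa [ha] using hα
  · simpa [ha] using hα
  · field_simp
  · field_simp
  · simp only [mem_filter, mem_univ, true_and] at hα
    congr 1
    field_simp

section CharThree

variable {F : Type*} [Field F]

lemma add_inv_eq_iff {β c : F} (hβ : β ≠ 0) : β + β⁻¹ = c ↔ β ^ 2 - c * β + 1 = 0 := by
  constructor
  · rintro rfl; field_simp; ring
  · intro h; field_simp; linear_combination h

lemma filter_add_inv_eq_zero [Fintype F] [DecidableEq F] :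
    univ.filter (fun β : F => β ≠ 0 ∧ β + β⁻¹ = 0) = univ.filter (fun β : F => β ^ 2 = -1) := by
  ext β
  simp only [mem_filter, mem_univ, true_and]
  constructor
  · rintro ⟨hβ, h⟩
    linear_combination (add_inv_eq_iff hβ).1 h
  · intro h
    have hβ : β ≠ 0 := by rintro rfl; simp at h
    exact ⟨hβ, (add_inv_eq_iff hβ).2 (by linear_combination h)⟩

variable [Algebra (ZMod 3) F]

lemma three_eq_zero_of_algebra_zmod_three : (3 : F) = 0 := by
  rw [← map_ofNat (algebraMap (ZMod 3) F) 3, show (OfNat.ofNat 3 : ZMod 3) = 0 from rfl, map_zero]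

lemma mem_range_algebraMap_zmod_three {x : F} :
    x ∈ Set.range (algebraMap (ZMod 3) F) ↔ x = 0 ∨ x = 1 ∨ x = -1 := by
  constructor
  · rintro ⟨t, rfl⟩
    obtain rfl | rfl | rfl : t = 0 ∨ t = 1 ∨ t = -1 := by revert t; decide
    all_goals simp
  · rintro (rfl | rfl | rfl)
    exacts [⟨0, map_zero _⟩, ⟨1, map_one _⟩, ⟨-1, by simp⟩]

lemma add_inv_mem_range_algebraMap_iff {β : F} (hβ : β ≠ 0) :
    β + β⁻¹ ∈ Set.range (algebraMap (ZMod 3) F) ↔ β ^ 2 = -1 ∨ β = -1 ∨ β = 1 := by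
  have h3 := three_eq_zero_of_algebra_zmod_three (F := F)
  have hone : β ^ 2 - 1 * β + 1 = (β + 1) ^ 2 := by linear_combination (-β) * h3
  have hneg : β ^ 2 - -1 * β + 1 = (β - 1) ^ 2 := by linear_combination β * h3
  rw [mem_range_algebraMap_zmod_three, add_inv_eq_iff hβ, add_inv_eq_iff hβ, add_inv_eq_iff hβ,
    hone, hneg, pow_eq_zero_iff two_ne_zero, pow_eq_zero_iff two_ne_zero, zero_mul, sub_zero,
    add_eq_zero_iff_eq_neg, add_eq_zero_iff_eq_neg, sub_eq_zero]

variable [Fintype F] [DecidableEq F]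

lemma card_filter_add_inv_mem_range_algebraMap :
    #(univ.filter fun β : F => β ≠ 0 ∧ β + β⁻¹ ∈ Set.range (algebraMap (ZMod 3) F))
      = #(univ.filter fun β : F => β ^ 2 = -1) + 2 := by
  have h3 := three_eq_zero_of_algebra_zmod_three (F := F)
  have hsplit : univ.filter (fun β : F => β ≠ 0 ∧ β + β⁻¹ ∈ Set.range (algebraMap (ZMod 3) F))
      = univ.filter (fun β : F => β ^ 2 = -1) ∪ {-1, 1} := by
    ext β
    simp only [mem_filter, mem_univ, true_and, mem_union, mem_insert, mem_singleton]
    constructor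
    · rintro ⟨hβ, h⟩
      exact (add_inv_mem_range_algebraMap_iff hβ).1 h
    · intro h
      have hβ : β ≠ 0 := by rintro rfl; simp at h
      exact ⟨hβ, (add_inv_mem_range_algebraMap_iff hβ).2 h⟩
  have hne : (-1 : F) ≠ 1 := fun h => one_ne_zero (by linear_combination h3 + h)
  rw [hsplit, card_union_of_disjoint, card_pair hne]
  simp only [disjoint_left, mem_filter, mem_univ, true_and, mem_insert, mem_singleton]
  rintro β hβ (rfl | rfl) <;> exact hne (by simpa using hβ.symm)

lemma card_sq_eq_neg_one {r : ℕ} (hF : Fintype.card F = 3 ^ r) :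
    (#(univ.filter fun β : F => β ^ 2 = -1) : ℤ) = (-1) ^ r + 1 := by
  have : CharP F 3 := charP_of_injective_algebraMap' (ZMod 3) 3
  have hchar : ringChar F ≠ 2 := by rw [ringChar.eq F 3]; decide
  rw [← Set.toFinset_ofPred, quadraticChar_card_sqrts hchar, quadraticChar_neg_one hchar, hF,
    Nat.cast_pow, map_pow]
  rfl

end CharThree

theorem first_moment_trace_nonzero_square_args_general (r : ℕ) (F : Type) [Field F]
    [Fintype F] [DecidableEq F] [Algebra (ZMod 3) F] (hF : Fintype.card F = 3 ^ r) :
    ∑ a ∈ Finset.univ.filter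
        (fun a : F => a ≠ 0 ∧ Algebra.trace (ZMod 3) F a ≠ 0),
      kloos F (a ^ 2)
      = (2 / 3 : ℂ) * (-1 : ℂ) ^ r * (3 ^ r : ℂ) := by
  have hN : (#(univ.filter fun β : F => β ^ 2 = -1) : ℂ) = (-1) ^ r + 1 := by
    exact_mod_cast card_sq_eq_neg_one hF
  set q : ℂ := (Fintype.card F : ℂ)
  set N := #(univ.filter fun β : F => β ^ 2 = -1)
  have hq : q = 3 ^ r := by simp [q, hF]
  have htrace : univ.filter (fun a : F => a ≠ 0 ∧ Algebra.trace (ZMod 3) F a ≠ 0)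
      = univ.filter (fun a : F => Algebra.trace (ZMod 3) F a ≠ 0) :=
    filter_congr fun a _ => and_iff_right_of_imp fun h ha => h (ha ▸ map_zero _)
  calc _ = ∑ β ∈ univ.filter (fun β : F => β ≠ 0),
        ∑ a ∈ univ.filter (fun a : F => Algebra.trace (ZMod 3) F a ≠ 0),
          traceChar 3 F (a * (β + β⁻¹)) := by
        rw [sum_congr rfl fun a ha => kloos_sq_eq_sum_canChar F (mem_filter.1 ha).2.1, htrace,
          sum_comm, canChar_eq_traceChar]
    _ = ∑ β ∈ univ.filter (fun β : F => β ≠ 0), ((if β + β⁻¹ = 0 then q else 0)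
          - if β + β⁻¹ ∈ Set.range (algebraMap (ZMod 3) F) then q / 3 else 0) := by
        simp_rw [sum_traceChar_mul_of_trace_ne_zero]
        push_cast
        rfl
    _ = q * N - q / 3 * (N + 2) := by
        rw [sum_sub_distrib, ← sum_filter, ← sum_filter, filter_filter, filter_filter, sum_const,
          sum_const, filter_add_inv_eq_zero, card_filter_add_inv_mem_range_algebraMap]
        push_cast [nsmul_eq_mul]
        ring
    _ = _ := by
        rw [hq, hN]
        ring

/-- `T₁₂SK = ∑_{a ∈ F_q^*, tr a ≠ 0} K(λ;a²) = (2/3)·(-1)^r·q`, where q = 3^r. -/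
theorem first_moment_trace_nonzero_square_args (r : ℕ) (hr : 0 < r) (F : Type) [Field F]
    [Fintype F] [DecidableEq F] [Algebra (ZMod 3) F] (hF : Fintype.card F = 3 ^ r) :
    ∑ a ∈ Finset.univ.filter
        (fun a : F => a ≠ 0 ∧ Algebra.trace (ZMod 3) F a ≠ 0),
      kloos F (a ^ 2)
      = (2 / 3 : ℂ) * (-1 : ℂ) ^ r * (3 ^ r : ℂ) :=
  first_moment_trace_nonzero_square_args_general r F hF
end
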